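/- arXiv:2508.20940 — 5 statements merged into one kernel-verified Lean document; each statement's English description precedes it below -/
import Mathlib

section
/- Let q be a prime power, t ≥ 1 an integer, 2 ≤ n ≤ m integers, and M = (𝔽_q^{n×m})^t. For every integer k with 1 ≤ k ≤ t·n, the sphere volume satisfies V(S_k) ≥ q^{(m+n−k/t−2)·k − t/4} (inequality of real numbers, with real exponent), and consequently the ball volume satisfies V_k ≥ q^{(m+n−k/t−2)·k − t/4}. -/
open Matrix

/-- The sum-rank weight of a tuple of matrices. -/
noncomputable def sumRankW {F : Type} [Field F] {t n m : ℕ}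
    (X : Fin t → Matrix (Fin n) (Fin m) F) : ℕ :=
  ∑ i, (X i).rank

/-- The number of tuples of matrices of sum-rank weight at most `r`
(the volume of a sum-rank ball of radius `r`). -/
noncomputable def ballVol (F : Type) [Field F] [Fintype F] (t n m r : ℕ) : ℕ :=
  Nat.card {X : Fin t → Matrix (Fin n) (Fin m) F // sumRankW X ≤ r}

/-- The number of tuples of matrices of sum-rank weight exactly `k`
(the volume of a sum-rank sphere of radius `k`). -/
noncomputable def sphereVol (F : Type) [Field F] [Fintype F] (t n m k : ℕ) : ℕ :=
  Nat.card {X : Fin t → Matrix (Fin n) (Fin m) F // sumRankW X = k}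

/-! A block matrix `[[A, B], [C, C A⁻¹ B]]` with `A ∈ GL_r` has rank exactly `r`, and distinct
triples `(A, B, C)` give distinct matrices, so there are at least
`|GL_r| q^{r(m-r) + r(n-r)} ≥ q^{r(m+n-r-1)}` matrices of rank `r`. Splitting the weight `k` as
evenly as possible over the `t` blocks, `r_i ∈ {⌊k/t⌋, ⌈k/t⌉}`, makes `∑ r_i² ≤ k²/t + t/4`, so
there are at least `q^{k(m+n-1) - k²/t - t/4}` tuples of sum-rank weight `k`. -/

namespace Matrix

section Rank

variable {R : Type*} [CommRing R] [StrongRankCondition R] {ι α β : Type*} [Fintype ι]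
  [DecidableEq ι] [Fintype β]

theorem rank_fromBlocks_mul_inv_mul (A : GL ι R) (B : Matrix ι β R) (C : Matrix α ι R) :
    (fromBlocks (A : Matrix ι ι R) B C (C * (↑A⁻¹ : Matrix ι ι R) * B)).rank =
      Fintype.card ι := by
  refine le_antisymm ?_ ?_
  · have hfactor : fromBlocks (A : Matrix ι ι R) B C (C * (↑A⁻¹ : Matrix ι ι R) * B) =
        fromRows (A : Matrix ι ι R) C * fromCols 1 ((↑A⁻¹ : Matrix ι ι R) * B) := by
      rw [fromRows_mul_fromCols, ← Matrix.mul_assoc, ← Matrix.mul_assoc, A.mul_inv,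
        Matrix.one_mul, Matrix.mul_one, Matrix.mul_one]
    rw [hfactor]
    exact (rank_mul_le_left _ _).trans (rank_le_card_width _)
  · calc Fintype.card ι = (A : Matrix ι ι R).rank := (rank_of_isUnit _ A.isUnit).symm
      _ = ((fromBlocks (A : Matrix ι ι R) B C (C * (↑A⁻¹ : Matrix ι ι R) * B)).submatrix
            Sum.inl Sum.inl).rank := rfl
      _ ≤ _ := rank_submatrix_le _ _ _

theorem card_GL_prod_le_card_rank_eq [Finite R] [Finite α] :
    Nat.card (GL ι R × Matrix ι β R × Matrix α ι R) ≤
      Nat.card {X : Matrix (ι ⊕ α) (ι ⊕ β) R // X.rank = Fintype.card ι} := by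
  refine Nat.card_le_card_of_injective
    (fun p => ⟨fromBlocks (p.1 : Matrix ι ι R) p.2.1 p.2.2 (p.2.2 * (↑p.1⁻¹ : Matrix ι ι R) * p.2.1),
      rank_fromBlocks_mul_inv_mul _ _ _⟩) ?_
  rintro ⟨A, B, C⟩ ⟨A', B', C'⟩ h
  obtain ⟨hA, hB, hC, -⟩ := fromBlocks_inj.mp (congrArg Subtype.val h)
  exact Prod.ext (Units.ext hA) (Prod.ext hB hC)

end Rank

variable {F : Type*} [Field F] [Fintype F]

theorem pow_sq_le_pow_mul_card_GL (r : ℕ) :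
    Fintype.card F ^ r ^ 2 ≤ Fintype.card F ^ r * Nat.card (GL (Fin r) F) := by
  set q := Fintype.card F
  have hq : 2 ≤ q := Fintype.one_lt_card
  have hfactor (i : Fin r) : q ^ r ≤ q * (q ^ r - q ^ (i : ℕ)) := by
    have h1 : q * q ^ (i : ℕ) ≤ q ^ r := by
      rw [← pow_succ']; exact Nat.pow_le_pow_right (by omega) i.isLt
    have h2 : 2 * q ^ r ≤ q * q ^ r := Nat.mul_le_mul_right _ hq
    rw [Nat.mul_sub]; omega
  calc q ^ r ^ 2 = ∏ _i : Fin r, q ^ r := by simp [← pow_mul, sq]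
    _ ≤ ∏ i : Fin r, q * (q ^ r - q ^ (i : ℕ)) := Finset.prod_le_prod' fun i _ => hfactor i
    _ = q ^ r * Nat.card (GL (Fin r) F) := by
      rw [card_GL_field, Finset.prod_mul_distrib, Finset.prod_const, Finset.card_fin]

-- That is, `#{X | rank X = r} ≥ q ^ (r * (m + n - r - 1))`, without truncated subtraction.
theorem pow_le_pow_mul_card_rank_eq {r n m : ℕ} (hrn : r ≤ n) (hrm : r ≤ m) :
    Fintype.card F ^ (r * (m + n)) ≤
      Fintype.card F ^ (r ^ 2 + r) * Nat.card {X : Matrix (Fin n) (Fin m) F // X.rank = r} := by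
  set q := Fintype.card F
  let eRows : Fin r ⊕ Fin (n - r) ≃ Fin n := finSumFinEquiv.trans (finCongr (by omega))
  let eCols : Fin r ⊕ Fin (m - r) ≃ Fin m := finSumFinEquiv.trans (finCongr (by omega))
  have hreindex : Nat.card {X : Matrix (Fin r ⊕ Fin (n - r)) (Fin r ⊕ Fin (m - r)) F //
      X.rank = Fintype.card (Fin r)} = Nat.card {X : Matrix (Fin n) (Fin m) F // X.rank = r} :=
    Nat.card_congr <| (reindex eRows eCols).subtypeEquiv fun X => by
      rw [rank_reindex, Fintype.card_fin]
  have hcard (a b : ℕ) : Nat.card (Matrix (Fin a) (Fin b) F) = q ^ (a * b) := by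
    simp [Nat.card_eq_fintype_card, Matrix, ← pow_mul, mul_comm, q]
  have hblocks := card_GL_prod_le_card_rank_eq (R := F) (ι := Fin r) (α := Fin (n - r))
    (β := Fin (m - r))
  rw [hreindex, Nat.card_prod, Nat.card_prod, hcard, hcard] at hblocks
  calc q ^ (r * (m + n)) = q ^ r ^ 2 * (q ^ r ^ 2 * (q ^ (r * (m - r)) * q ^ ((n - r) * r))) := by
        rw [← pow_add, ← pow_add, ← pow_add]; congr 1; zify [hrn, hrm]; ring
    _ ≤ q ^ r ^ 2 *
          (q ^ r * Nat.card (GL (Fin r) F) * (q ^ (r * (m - r)) * q ^ ((n - r) * r))) := by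
        gcongr; exact pow_sq_le_pow_mul_card_GL r
    _ ≤ q ^ (r ^ 2 + r) * Nat.card {X : Matrix (Fin n) (Fin m) F // X.rank = r} := by
        rw [pow_add, mul_assoc (q ^ r ^ 2), mul_assoc (q ^ r)]; gcongr

end Matrix

section SumRank

variable {F : Type} [Field F] [Fintype F] {t n m : ℕ}

theorem prod_card_rank_eq_le_sphereVol (r : Fin t → ℕ) :
    ∏ i, Nat.card {X : Matrix (Fin n) (Fin m) F // X.rank = r i} ≤
      sphereVol F t n m (∑ i, r i) := by
  rw [← Nat.card_pi]
  refine Nat.card_le_card_of_injective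
    (fun Y => ⟨fun i => (Y i).1, Finset.sum_congr rfl fun i _ => (Y i).2⟩) ?_
  intro Y Y' h
  funext i
  exact Subtype.ext (congrFun (congrArg Subtype.val h) i)

theorem pow_le_pow_mul_sphereVol {r : Fin t → ℕ} (hrn : ∀ i, r i ≤ n) (hrm : ∀ i, r i ≤ m) :
    Fintype.card F ^ ((∑ i, r i) * (m + n)) ≤
      Fintype.card F ^ (∑ i, (r i ^ 2 + r i)) * sphereVol F t n m (∑ i, r i) := by
  calc Fintype.card F ^ ((∑ i, r i) * (m + n)) = ∏ i, Fintype.card F ^ (r i * (m + n)) := by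
        rw [Finset.prod_pow_eq_pow_sum, Finset.sum_mul]
    _ ≤ ∏ i, Fintype.card F ^ (r i ^ 2 + r i) *
          Nat.card {X : Matrix (Fin n) (Fin m) F // X.rank = r i} :=
        Finset.prod_le_prod' fun i _ => pow_le_pow_mul_card_rank_eq (hrn i) (hrm i)
    _ ≤ _ := by
        rw [Finset.prod_mul_distrib, Finset.prod_pow_eq_pow_sum]
        exact Nat.mul_le_mul_left _ (prod_card_rank_eq_le_sphereVol r)

theorem sphereVol_le_ballVol (k : ℕ) : sphereVol F t n m k ≤ ballVol F t n m k :=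
  Nat.card_le_card_of_injective (Subtype.impEmbedding _ _ fun _ => le_of_eq)
    (Subtype.impEmbedding _ _ _).injective

end SumRank

def balancedProfile (t k : ℕ) (i : Fin t) : ℕ :=
  k / t + if (i : ℕ) < k % t then 1 else 0

section BalancedProfile

variable {t k : ℕ}

theorem sum_ite_val_lt_one_zero {s : ℕ} (hs : s ≤ t) :
    ∑ i : Fin t, (if (i : ℕ) < s then 1 else 0) = s := by
  simp [Finset.sum_boole, Fin.card_filter_val_lt, hs]

theorem balancedProfile_le {n : ℕ} (hk : k ≤ t * n) (i : Fin t) : balancedProfile t k i ≤ n := by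
  have hdecomp := Nat.div_add_mod k t
  have hrem : k % t < t := Nat.mod_lt k i.pos
  unfold balancedProfile
  split_ifs with hi
  · by_contra! hn
    have : t * n ≤ t * (k / t) := Nat.mul_le_mul_left t (by omega)
    omega
  · by_contra! hn
    have : t * (n + 1) ≤ t * (k / t) := Nat.mul_le_mul_left t (by omega)
    rw [Nat.mul_succ] at this
    omega

theorem sum_balancedProfile (ht : 0 < t) : ∑ i, balancedProfile t k i = k := by
  simp only [balancedProfile, Finset.sum_add_distrib, Finset.sum_const, Finset.card_univ,
    Fintype.card_fin, smul_eq_mul, sum_ite_val_lt_one_zero (Nat.mod_lt k ht).le]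
  exact Nat.div_add_mod k t

-- With `k = t a + s`, exactly: `t ∑ r_i² = k² + s (t - s)`.
theorem sum_sq_balancedProfile_le (ht : 0 < t) :
    4 * (t * ∑ i, balancedProfile t k i ^ 2) ≤ 4 * k ^ 2 + t ^ 2 := by
  have hsq (i : Fin t) : balancedProfile t k i ^ 2 =
      (k / t) ^ 2 + (2 * (k / t) + 1) * (if (i : ℕ) < k % t then 1 else 0) := by
    unfold balancedProfile; split_ifs <;> ring
  simp only [hsq, Finset.sum_add_distrib, ← Finset.mul_sum, Finset.sum_const, Finset.card_univ,
    Fintype.card_fin, smul_eq_mul, sum_ite_val_lt_one_zero (Nat.mod_lt k ht).le]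
  have hk := (Nat.div_add_mod k t).symm
  generalize k / t = a at hk ⊢
  generalize k % t = s at hk ⊢
  subst hk
  zify
  nlinarith [sq_nonneg ((t : ℤ) - 2 * s)]

end BalancedProfile

theorem sphere_exponent_le {t k m n : ℕ} {S : ℝ} (ht : 0 < t)
    (hS : 4 * (t * S) ≤ 4 * k ^ 2 + t ^ 2) :
    ((m : ℝ) + n - (k : ℝ) / t - 2) * k - (t : ℝ) / 4 ≤ k * (m + n) - (S + k) := by
  have ht' : (0 : ℝ) < t := by exact_mod_cast ht
  have hk : (0 : ℝ) ≤ k := k.cast_nonneg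
  rw [← sub_nonneg]
  have hkey : (k * (m + n) - (S + k)) - (((m : ℝ) + n - (k : ℝ) / t - 2) * k - (t : ℝ) / 4) =
      (4 * k ^ 2 + t ^ 2 - 4 * (t * S) + 4 * t * k) / (4 * t) := by
    field_simp; ring
  rw [hkey]
  apply div_nonneg <;> nlinarith

theorem rpow_le_of_pow_le_pow_mul {q V x : ℝ} {a b : ℕ} (hq : 1 ≤ q) (hx : x ≤ a - b)
    (h : q ^ a ≤ q ^ b * V) : q ^ x ≤ V := by
  calc q ^ x ≤ q ^ ((a : ℝ) - b) := Real.rpow_le_rpow_of_exponent_le hq hx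
    _ = q ^ a / q ^ b := by rw [Real.rpow_sub (by linarith), Real.rpow_natCast, Real.rpow_natCast]
    _ ≤ V := by rw [div_le_iff₀' (by positivity)]; exact h

theorem stmt_2_general (F : Type) [Field F] [Fintype F] (q t n m k : ℕ)
    (hq : Fintype.card F = q) (ht : 1 ≤ t) (hnm : n ≤ m)
    (hk2 : k ≤ t * n) :
    (q : ℝ) ^ (((m : ℝ) + n - (k : ℝ) / t - 2) * k - (t : ℝ) / 4) ≤ sphereVol F t n m k ∧
    (q : ℝ) ^ (((m : ℝ) + n - (k : ℝ) / t - 2) * k - (t : ℝ) / 4) ≤ ballVol F t n m k := by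
  subst hq
  set r := balancedProfile t k
  have hrn : ∀ i, r i ≤ n := balancedProfile_le hk2
  have hsum : ∑ i, r i = k := sum_balancedProfile ht
  have hcount := pow_le_pow_mul_sphereVol (F := F) hrn fun i => (hrn i).trans hnm
  rw [Finset.sum_add_distrib, hsum] at hcount
  have hsq : 4 * (t * ((∑ i, r i ^ 2 : ℕ) : ℝ)) ≤ 4 * k ^ 2 + t ^ 2 := by
    exact_mod_cast sum_sq_balancedProfile_le ht
  have hexp := sphere_exponent_le (m := m) (n := n) ht hsq
  have hsphere := rpow_le_of_pow_le_pow_mul (q := Fintype.card F) (V := sphereVol F t n m k)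
    (a := k * (m + n)) (b := ∑ i, r i ^ 2 + k) (Nat.one_le_cast.mpr Fintype.card_pos)
    (by push_cast at hexp ⊢; exact hexp) (by exact_mod_cast hcount)
  exact ⟨hsphere, hsphere.trans (by exact_mod_cast sphereVol_le_ballVol k)⟩

theorem stmt_2 (F : Type) [Field F] [Fintype F] (q t n m k : ℕ)
    (hq : Fintype.card F = q) (ht : 1 ≤ t) (hn : 2 ≤ n) (hnm : n ≤ m)
    (hk1 : 1 ≤ k) (hk2 : k ≤ t * n) :
    (q : ℝ) ^ (((m : ℝ) + n - (k : ℝ) / t - 2) * k - (t : ℝ) / 4) ≤ sphereVol F t n m k ∧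
    (q : ℝ) ^ (((m : ℝ) + n - (k : ℝ) / t - 2) * k - (t : ℝ) / 4) ≤ ballVol F t n m k :=
  stmt_2_general F q t n m k hq ht hnm hk2
end

section
/- Let q ≥ 5 be a prime power, n ≥ 2 an integer, and M = 𝔽_q^{n×n} ⊕ 𝔽_q^{n×n} (the case t = 2). Then there exists no perfect linear sum-rank code C in M whose minimum distance d satisfies ⌊(d−1)/2⌋ ≥ 6. -/
open Matrix

/-- `d` is the minimum sum-rank distance of the linear code `C`:
`d` is the least sum-rank weight of a nonzero codeword of `C`
(in particular `C` contains a nonzero element). -/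
def IsMinDist {F : Type} [Field F] {t n : ℕ}
    (C : Submodule F (Fin t → Matrix (Fin n) (Fin n) F)) (d : ℕ) : Prop :=
  IsLeast {w | ∃ x ∈ C, x ≠ 0 ∧ sumRankW x = w} d

/-- The linear code `C` with minimum distance `d` is perfect:
`|C| · V_{⌊(d-1)/2⌋} = |M|`. -/
def IsPerfect (F : Type) [Field F] [Fintype F] {t n : ℕ}
    (C : Submodule F (Fin t → Matrix (Fin n) (Fin n) F)) (d : ℕ) : Prop :=
  Nat.card C * ballVol F t n n ((d - 1) / 2) =
    Nat.card (Fin t → Matrix (Fin n) (Fin n) F)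


/-!
Restricting codewords to all but `d - 1` of the `2n` matrix columns is injective on `C`
(a Singleton-type bound), so perfection forces `V_k ≥ q^{n(d-1)} ≥ q^{2nk}`. On the other hand,
a rank-`r` matrix factors as `A * B` with `A` left invertible, and `(M, g) ↦ (A g, g⁻¹ B)` is
injective on pairs with `g ∈ GL_r`, so there are at most `q^{2nr - r(r-1)}` matrices of rank `r`.
Summing over the at most `(k+1)^2` rank pairs `(a, b)` with `a + b ≤ k`, and using
`a(a-1) + b(b-1) + 2n(k-a-b) ≥ k`, gives `V_k ≤ (k+1)^2 q^{2nk-k} < q^{2nk}` because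
`(k+1)^2 < 2^k` for `k ≥ 6`.
-/

open Finset

theorem add_one_sq_lt_two_pow {k : ℕ} (hk : 6 ≤ k) : (k + 1) ^ 2 < 2 ^ k := by
  induction k, hk using Nat.le_induction with
  | base => norm_num
  | succ k hk ih => rw [pow_succ 2]; nlinarith

theorem le_mul_pred_add_mul_pred_add {a b k N : ℕ} (hk : 4 ≤ k) (hkN : k ≤ N) (hab : a + b ≤ k) :
    k ≤ a * (a - 1) + b * (b - 1) + N * (k - (a + b)) := by
  rcases hab.lt_or_eq with hlt | rfl
  · have : N ≤ N * (k - (a + b)) := Nat.le_mul_of_pos_right N (by omega)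
    omega
  · rw [Nat.sub_self, mul_zero, add_zero]
    have ha : a * (a - 1) + a = a * a := by cases a <;> simp [Nat.mul_succ]
    have hb : b * (b - 1) + b = b * b := by cases b <;> simp [Nat.mul_succ]
    generalize a * (a - 1) = A at ha ⊢
    generalize b * (b - 1) = B at hb ⊢
    zify at *
    nlinarith [sq_nonneg ((a : ℤ) - b)]

namespace Matrix

section Rank

variable {F : Type*} [Field F] {m n : Type*} [Fintype n]

theorem rank_eq_zero_iff (A : Matrix m n F) : A.rank = 0 ↔ A = 0 := by
  classical
  rw [Matrix.rank, Submodule.finrank_eq_zero, LinearMap.range_eq_bot, ← Matrix.toLin'_apply',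
    LinearEquiv.map_eq_zero_iff]

variable [Fintype m]

theorem rank_le_card_of_col_support (A : Matrix m n F) (s : Finset n)
    (h : ∀ i, ∀ j ∉ s, A i j = 0) : A.rank ≤ #s := by
  rw [← rank_transpose]
  refine Aᵀ.rank_le_card_of_support_subset s <| Function.support_subset_iff'.2 fun j hj => ?_
  funext i
  exact h i j hj

theorem exists_mul_eq_of_rank_eq (M : Matrix m n F) {r : ℕ} (hr : M.rank = r) :
    ∃ (A : Matrix m (Fin r) F) (B : Matrix (Fin r) n F), A * B = M ∧
      ∃ A' : Matrix (Fin r) m F, A' * A = 1 := by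
  classical
  let e := (Module.finBasisOfFinrankEq F (LinearMap.range M.mulVecLin) hr).equivFun
  let f := (LinearMap.range M.mulVecLin).subtype ∘ₗ e.symm.toLinearMap
  obtain ⟨f', hf'⟩ := f.exists_leftInverse_of_injective <|
    LinearMap.ker_eq_bot.2 (Subtype.val_injective.comp e.symm.injective)
  refine ⟨f.toMatrix', (e.toLinearMap ∘ₗ M.mulVecLin.rangeRestrict).toMatrix', ?_,
    f'.toMatrix', ?_⟩
  · rw [← LinearMap.toMatrix'_comp]
    convert LinearMap.toMatrix'_toLin' M
    exact LinearMap.ext fun v => by simp [f, Matrix.toLin'_apply']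
  · rw [← LinearMap.toMatrix'_comp, hf', LinearMap.toMatrix'_id]

variable [Fintype F]

theorem pow_le_card_GL (r : ℕ) : Fintype.card F ^ (r * (r - 1)) ≤ Nat.card (GL (Fin r) F) := by
  rw [card_GL_field, mul_comm, pow_mul, ← Fin.prod_const]
  set q := Fintype.card F
  have hq : 2 ≤ q := Fintype.one_lt_card
  refine Finset.prod_le_prod' fun i _ => ?_
  have hir := i.is_lt
  have hi : q ^ (i : ℕ) ≤ q ^ (r - 1) := Nat.pow_le_pow_right (by omega) (by omega)
  have hr : q ^ r = q ^ (r - 1) * q := by rw [← pow_succ]; congr 1; omega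
  have : q ^ (r - 1) * 2 ≤ q ^ (r - 1) * q := Nat.mul_le_mul_left _ hq
  omega

theorem card_rank_eq_mul_le (r : ℕ) :
    Nat.card {M : Matrix m n F // M.rank = r} * Fintype.card F ^ (r * (r - 1)) ≤
      Fintype.card F ^ ((Fintype.card m + Fintype.card n) * r) := by
  classical
  choose A B hAB A' hA' using fun M : {M : Matrix m n F // M.rank = r} =>
    M.1.exists_mul_eq_of_rank_eq M.2
  let Φ (p : {M : Matrix m n F // M.rank = r} × GL (Fin r) F) :
      Matrix m (Fin r) F × Matrix (Fin r) n F :=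
    (A p.1 * p.2.val, p.2⁻¹.val * B p.1)
  have hΦ : Function.Injective Φ := by
    rintro ⟨M, g⟩ ⟨M', g'⟩ h
    obtain ⟨hA, hB⟩ := Prod.mk.inj h
    have hprod (M : {M : Matrix m n F // M.rank = r}) (g : GL (Fin r) F) :
        A M * g.val * (g⁻¹.val * B M) = M := by
      rw [Matrix.mul_assoc, ← Matrix.mul_assoc g.val, Units.mul_inv, Matrix.one_mul, hAB]
    obtain rfl : M = M' := Subtype.ext <| by rw [← hprod M g, ← hprod M' g', hA, hB]
    refine Prod.ext rfl (Units.ext ?_)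
    calc g.val = A' M * (A M * g.val) := by
          rw [← Matrix.mul_assoc, hA', Matrix.one_mul]
      _ = g' := by rw [hA, ← Matrix.mul_assoc, hA', Matrix.one_mul]
  calc Nat.card {M : Matrix m n F // M.rank = r} * Fintype.card F ^ (r * (r - 1))
      ≤ Nat.card ({M : Matrix m n F // M.rank = r} × GL (Fin r) F) := by
        rw [Nat.card_prod]; exact Nat.mul_le_mul_left _ (pow_le_card_GL r)
    _ ≤ Nat.card (Matrix m (Fin r) F × Matrix (Fin r) n F) := Nat.card_le_card_of_injective Φ hΦ
    _ = _ := by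
          simp only [Matrix, Nat.card_eq_fintype_card, Fintype.card_prod, Fintype.card_fun,
            Fintype.card_fin]
          ring

theorem card_rank_eq_mul_card_rank_eq_mul_le {a b k : ℕ} (hk : 4 ≤ k)
    (hkN : k ≤ Fintype.card m + Fintype.card n) (hab : a + b ≤ k) :
    Nat.card {M : Matrix m n F // M.rank = a} * Nat.card {M : Matrix m n F // M.rank = b} *
      Fintype.card F ^ k ≤ Fintype.card F ^ ((Fintype.card m + Fintype.card n) * k) := by
  set q := Fintype.card F
  set N := Fintype.card m + Fintype.card n
  have hq : 0 < q := Fintype.card_pos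
  calc _ ≤ Nat.card {M : Matrix m n F // M.rank = a} * Nat.card {M : Matrix m n F // M.rank = b} *
        q ^ (a * (a - 1) + b * (b - 1) + N * (k - (a + b))) :=
        Nat.mul_le_mul_left _ <| Nat.pow_le_pow_right hq <| le_mul_pred_add_mul_pred_add hk hkN hab
    _ = (Nat.card {M : Matrix m n F // M.rank = a} * q ^ (a * (a - 1))) *
        (Nat.card {M : Matrix m n F // M.rank = b} * q ^ (b * (b - 1))) *
        q ^ (N * (k - (a + b))) := by rw [pow_add, pow_add]; ring
    _ ≤ q ^ (N * a) * q ^ (N * b) * q ^ (N * (k - (a + b))) := by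
        gcongr <;> exact card_rank_eq_mul_le _
    _ = q ^ (N * k) := by rw [← pow_add, ← pow_add, ← mul_add, ← mul_add]; congr 2; omega

end Rank

end Matrix

section SumRank

variable {F : Type} [Field F] {t n m : ℕ}

theorem sumRankW_eq_zero_iff (X : Fin t → Matrix (Fin n) (Fin m) F) : sumRankW X = 0 ↔ X = 0 := by
  simp [sumRankW, Finset.sum_eq_zero_iff, Matrix.rank_eq_zero_iff, funext_iff]

theorem sumRankW_le (X : Fin t → Matrix (Fin n) (Fin m) F) : sumRankW X ≤ t * m := by
  simpa [sumRankW] using Finset.sum_le_sum fun i (_ : i ∈ univ) => (X i).rank_le_width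

theorem sumRankW_le_card_of_support (X : Fin t → Matrix (Fin n) (Fin m) F)
    (E : Finset (Fin t × Fin m)) (h : ∀ i r j, (i, j) ∉ E → X i r j = 0) :
    sumRankW X ≤ #E := by
  classical
  calc sumRankW X ≤ ∑ i, #{j | (i, j) ∈ E} :=
        Finset.sum_le_sum fun i _ => (X i).rank_le_card_of_col_support _ fun r j hj =>
          h i r j (by simpa using hj)
    _ = #E := by
        simp only [Finset.card_filter]
        rw [← Fintype.sum_prod_type' (fun i j => if (i, j) ∈ E then 1 else 0)]
        simp

namespace IsMinDist

variable {C : Submodule F (Fin t → Matrix (Fin n) (Fin n) F)} {d : ℕ}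

theorem pos (hC : IsMinDist C d) : 0 < d := by
  obtain ⟨X, -, hX, rfl⟩ := hC.1
  exact Nat.pos_of_ne_zero ((sumRankW_eq_zero_iff X).not.2 hX)

theorem le_mul (hC : IsMinDist C d) : d ≤ t * n := by
  obtain ⟨X, -, -, rfl⟩ := hC.1
  exact sumRankW_le X

theorem card_mul_pow_le [Fintype F] (hC : IsMinDist C d) :
    Nat.card C * Fintype.card F ^ (n * (d - 1)) ≤ Fintype.card F ^ (t * n * n) := by
  classical
  have hd := hC.le_mul
  obtain ⟨E, -, hE⟩ := exists_subset_card_eq (s := (univ : Finset (Fin t × Fin n))) (n := d - 1)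
    (by simp; omega)
  let ρ (X : C) (p : ↥Eᶜ) (r : Fin n) : F := (X : Fin t → Matrix (Fin n) (Fin n) F) p.1.1 r p.1.2
  have hρ : Function.Injective ρ := by
    intro X Y hXY
    by_contra hne
    have hdist := hC.2 ⟨_, sub_mem X.2 Y.2, sub_ne_zero.2 (Subtype.coe_injective.ne hne), rfl⟩
    have hsupp := sumRankW_le_card_of_support (X.1 - Y.1) E fun i r j hij => by
      rw [Pi.sub_apply, Matrix.sub_apply, sub_eq_zero]
      exact congrFun (congrFun hXY ⟨(i, j), mem_compl.2 hij⟩) r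
    have := hC.pos
    omega
  have hexp : n * (t * n - (d - 1)) + n * (d - 1) = t * n * n := by
    rw [← mul_add, Nat.sub_add_cancel (by omega), mul_comm]
  calc Nat.card C * Fintype.card F ^ (n * (d - 1))
      ≤ Nat.card (↥Eᶜ → Fin n → F) * Fintype.card F ^ (n * (d - 1)) := by
        gcongr; exact Nat.card_le_card_of_injective ρ hρ
    _ = Fintype.card F ^ (t * n * n) := by
        simp only [Nat.card_eq_fintype_card, Fintype.card_fun, Fintype.card_coe, card_compl, hE,
          Fintype.card_prod, Fintype.card_fin, ← pow_mul, ← pow_add]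
        rw [hexp]

end IsMinDist

end SumRank

theorem ballVol_two_eq_card (F : Type) [Field F] [Fintype F] (n m k : ℕ) :
    ballVol F 2 n m k =
      #{X : Matrix (Fin n) (Fin m) F × Matrix (Fin n) (Fin m) F | X.1.rank + X.2.rank ≤ k} := by
  rw [ballVol, ← Fintype.card_subtype, ← Nat.card_eq_fintype_card]
  exact Nat.card_congr <| (piFinTwoEquiv _).subtypeEquiv fun X => by
    simp [sumRankW, Fin.sum_univ_two]

theorem ballVol_two_lt {F : Type} [Field F] [Fintype F] {n m k : ℕ} (hk : 6 ≤ k)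
    (hkN : k ≤ n + m) : ballVol F 2 n m k < Fintype.card F ^ ((n + m) * k) := by
  classical
  set q := Fintype.card F
  let S (r : ℕ) : Finset (Matrix (Fin n) (Fin m) F) := {M | M.rank = r}
  let s : Finset (Matrix (Fin n) (Fin m) F × Matrix (Fin n) (Fin m) F) :=
    {X | X.1.rank + X.2.rank ≤ k}
  let P : Finset (ℕ × ℕ) := {p ∈ range (k + 1) ×ˢ range (k + 1) | p.1 + p.2 ≤ k}
  have hmaps : ∀ X ∈ s, (X.1.rank, X.2.rank) ∈ P := by
    intro X hX
    simp only [s, P, mem_filter, mem_univ, true_and, mem_product, mem_range] at hX ⊢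
    omega
  have hfiber : ∀ p ∈ P, #{X ∈ s | (X.1.rank, X.2.rank) = p} * q ^ k ≤ q ^ ((n + m) * k) := by
    rintro ⟨a, b⟩ hab
    have hsub : {X ∈ s | (X.1.rank, X.2.rank) = (a, b)} ⊆ S a ×ˢ S b := by
      intro X hX
      simp only [mem_filter, Prod.mk.injEq] at hX
      simp [S, hX.2]
    have hcard (r : ℕ) : #(S r) = Nat.card {M : Matrix (Fin n) (Fin m) F // M.rank = r} := by
      rw [Nat.card_eq_fintype_card, Fintype.card_subtype]
    calc _ ≤ #(S a) * #(S b) * q ^ k := by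
          gcongr
          exact (card_le_card hsub).trans_eq (card_product _ _)
      _ ≤ q ^ ((n + m) * k) := by
          rw [hcard, hcard]
          simpa using Matrix.card_rank_eq_mul_card_rank_eq_mul_le (F := F) (m := Fin n)
            (n := Fin m) (by omega) (by simpa using hkN) (mem_filter.1 hab).2
  have hP : #P < q ^ k :=
    calc #P ≤ (k + 1) ^ 2 := (card_filter_le _ _).trans_eq (by simp [sq])
      _ < 2 ^ k := add_one_sq_lt_two_pow hk
      _ ≤ q ^ k := Nat.pow_le_pow_left Fintype.one_lt_card k
  have hsum : #s * q ^ k < q ^ k * q ^ ((n + m) * k) :=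
    calc #s * q ^ k = ∑ p ∈ P, #{X ∈ s | (X.1.rank, X.2.rank) = p} * q ^ k := by
          rw [card_eq_sum_card_fiberwise hmaps, sum_mul]
      _ ≤ #P * q ^ ((n + m) * k) := by
          grw [sum_le_sum hfiber, sum_const, smul_eq_mul]
      _ < q ^ k * q ^ ((n + m) * k) := by gcongr
  rw [ballVol_two_eq_card]
  exact Nat.lt_of_mul_lt_mul_left (by rwa [mul_comm] at hsum)

theorem stmt_4_general (F : Type) [Field F] [Fintype F] (n : ℕ) :
    ¬ ∃ (C : Submodule F (Fin 2 → Matrix (Fin n) (Fin n) F)) (d : ℕ),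
        IsMinDist C d ∧ IsPerfect F C d ∧ 6 ≤ (d - 1) / 2 := by
  rintro ⟨C, d, hmin, hperf, hk⟩
  have hd := hmin.le_mul
  have hball : ballVol F 2 n n ((d - 1) / 2) < Fintype.card F ^ (n * (d - 1)) := by
    refine (ballVol_two_lt hk (by omega)).trans_le (Nat.pow_le_pow_right Fintype.card_pos ?_)
    rw [← two_mul, mul_comm 2 n, mul_assoc]
    exact Nat.mul_le_mul_left n (by omega)
  have hsingleton := hmin.card_mul_pow_le
  have hspace : Nat.card (Fin 2 → Matrix (Fin n) (Fin n) F) =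
      Fintype.card F ^ (2 * n * n) := by
    simp only [Matrix, Nat.card_eq_fintype_card, Fintype.card_fun, Fintype.card_fin, ← pow_mul]
    ring_nf
  rw [IsPerfect, hspace] at hperf
  have hlt := Nat.mul_lt_mul_of_pos_left hball (Nat.card_pos (α := C))
  linarith

theorem stmt_4 (F : Type) [Field F] [Fintype F] (q n : ℕ)
    (hq : Fintype.card F = q) (hq5 : 5 ≤ q) (hn : 2 ≤ n) :
    ¬ ∃ (C : Submodule F (Fin 2 → Matrix (Fin n) (Fin n) F)) (d : ℕ),
        IsMinDist C d ∧ IsPerfect F C d ∧ 6 ≤ (d - 1) / 2 :=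
  stmt_4_general F n
end

section
/- Let q be an odd prime power, t ≥ 1 and n ≥ 2 integers, and M = (𝔽_q^{n×n})^t. If t ≢ 1 (mod q) and t ≢ 2 (mod q), then there exists no perfect linear sum-rank code in M with minimum distance d ∈ {5, 6}. -/
/-!
A perfect code of packing radius 2 has `V₂ = |M| / |C|`, a power of `q`, and `V₂ > 1`, so
`q ∣ V₂`. On the other hand `V₂` is congruent mod `q` to the Hamming-ball volume
`∑_{k ≤ 2} (t choose k) (q - 1)^k`. Indeed, the elementary operations adding a multiple of a row
(column) of one component to a fixed pivot row (column) preserve the sum-rank weight, and each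
is the flow `X ↦ X + c • L X` of a square-zero operator `L`; off `ker L` these flows sweep out
affine lines of `q` points, so counting mod `q` only the common fixed points survive, and these
are the tuples `(x_k • E_{pp'})_k`, whose weight is the Hamming weight of `x`. Hence
`q ∣ 1 - t + (t choose 2)`, i.e. `q ∣ (t - 1)(t - 2)`, and a prime power dividing a product of
two coprime integers divides one of them.
-/

open Matrix

open Finset

section FlowCount
variable {F V : Type*} [Field F] [Fintype F] [AddCommGroup V] [Module F V] [DecidableEq V]

theorem card_dvd_card_of_add_smul_mem {w : V} (hw : w ≠ 0) {A : Finset V}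
    (hA : ∀ v ∈ A, ∀ c : F, v + c • w ∈ A) : Fintype.card F ∣ #A := by
  classical
  let π := (Submodule.span F {w}).mkQ
  rw [card_eq_sum_card_image π]
  refine dvd_sum fun y hy => ?_
  obtain ⟨v₀, hv₀, rfl⟩ := mem_image.mp hy
  have hfiber : {v ∈ A | π v = π v₀} = univ.image fun c : F => v₀ + c • w := by
    ext v
    simp only [mem_filter, mem_image, mem_univ, true_and]
    constructor
    · rintro ⟨-, hv⟩
      obtain ⟨c, hc⟩ := Submodule.mem_span_singleton.mp <| (Submodule.Quotient.eq _).mp hv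
      exact ⟨c, by rw [hc]; abel⟩
    · rintro ⟨c, rfl⟩
      refine ⟨hA v₀ hv₀ c, (Submodule.Quotient.eq _).mpr ?_⟩
      simpa using Submodule.smul_mem _ c (Submodule.mem_span_singleton_self w)
  rw [hfiber, card_image_of_injective _ fun a b hab => smul_left_injective F hw
    (add_left_cancel hab), card_univ]

theorem card_modEq_card_filter_eq_zero (L : V →ₗ[F] V) (hL : ∀ v, L (L v) = 0) {S : Finset V}
    (hS : ∀ v ∈ S, ∀ c : F, v + c • L v ∈ S) :
    #S ≡ #{v ∈ S | L v = 0} [MOD Fintype.card F] := by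
  have hdvd : Fintype.card F ∣ #{v ∈ S | L v ≠ 0} := by
    rw [card_eq_sum_card_image L]
    refine dvd_sum fun w hw => ?_
    obtain ⟨v₁, hv₁, rfl⟩ := mem_image.mp hw
    refine card_dvd_card_of_add_smul_mem (mem_filter.mp hv₁).2 fun v hv c => ?_
    simp only [mem_filter] at hv ⊢
    obtain ⟨⟨hvS, hv0⟩, hvw⟩ := hv
    have hLv : L (v + c • L v₁) = L v := by simp [← hvw, hL]
    exact ⟨⟨hvw ▸ hS v hvS c, hLv ▸ hv0⟩, hLv.trans hvw⟩
  rw [← card_filter_add_card_filter_not (s := S) (p := fun v => L v = 0)]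
  simpa using (Nat.modEq_zero_iff_dvd.mpr hdvd).add_left #{v ∈ S | L v = 0}

theorem card_modEq_card_filter_forall_eq_zero {ι : Type*} [Fintype ι] (L : ι → V →ₗ[F] V)
    (hL : ∀ a v, L a (L a v) = 0) (hker : ∀ a b v, L a v = 0 → L a (L b v) = 0) {S : Finset V}
    (hS : ∀ a, ∀ v ∈ S, ∀ c : F, v + c • L a v ∈ S) :
    #S ≡ #{v ∈ S | ∀ a, L a v = 0} [MOD Fintype.card F] := by
  classical
  -- `hker` keeps the common kernel of the operators treated so far stable under the next flow.
  suffices ∀ s : Finset ι, #S ≡ #{v ∈ S | ∀ a ∈ s, L a v = 0} [MOD Fintype.card F] by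
    simpa using this univ
  intro s
  induction s using Finset.induction_on with
  | empty => simp [Nat.ModEq.refl]
  | insert b s _ ih =>
    refine ih.trans ?_
    have := card_modEq_card_filter_eq_zero (L b) (hL b) (S := {v ∈ S | ∀ a ∈ s, L a v = 0})
      fun v hv c => by
        simp only [mem_filter] at hv ⊢
        exact ⟨hS b v hv.1 c, fun a ha => by simp [hv.2 a ha, hker a b v (hv.2 a ha)]⟩
    simpa [filter_filter, and_comm] using this

end FlowCount

section PivotOperations
variable {F : Type*} [Field F] {m n : Type*} [Fintype m] [Fintype n] [DecidableEq m] [DecidableEq n]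

theorem Matrix.rank_single_self (i : m) {c : F} (hc : c ≠ 0) : (single i i c).rank = 1 := by
  classical
  rw [← diagonal_single, rank_diagonal, Fintype.card_eq_one_iff]
  refine ⟨⟨i, by simpa using hc⟩, fun ⟨k, hk⟩ => Subtype.ext ?_⟩
  by_contra hki
  exact hk (Pi.single_eq_of_ne (M := fun _ => F) hki c)

theorem Matrix.rank_single_of_ne_zero (i : m) (j : n) {c : F} (hc : c ≠ 0) :
    (single i j c).rank = 1 := by
  refine le_antisymm ?_ ?_
  · calc (single i j c).rank = (single i j (1 : F) * single j j c).rank := by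
          rw [single_mul_single_same, one_mul]
      _ ≤ (single j j c).rank := rank_mul_le_right _ _
      _ = 1 := rank_single_self j hc
  · calc 1 = (single i i c).rank := (rank_single_self i hc).symm
      _ = (single i j c * single j i (1 : F)).rank := by rw [single_mul_single_same, mul_one]
      _ ≤ (single i j c).rank := rank_mul_le_left _ _

abbrev PivotIndex (p : m) (p' : n) := {i : m // i ≠ p} ⊕ {j : n // j ≠ p'}

variable (F) in
/-- The flow `X + c • pivotOp F p p' a X` adds `c` times row `i` to the pivot row `p`
(`a = .inl i`), or `c` times column `j` to the pivot column `p'` (`a = .inr j`). -/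
def pivotOp (p : m) (p' : n) : PivotIndex p p' → Module.End F (Matrix m n F)
  | .inl i => mulLeftLinearMap n F (single p i.1 1)
  | .inr j => mulRightLinearMap m F (single j.1 p' 1)

variable {p : m} {p' : n}

theorem pivotOp_pivotOp_self (a : PivotIndex p p') (X : Matrix m n F) :
    pivotOp F p p' a (pivotOp F p p' a X) = 0 := by
  rcases a with ⟨i, hi⟩ | ⟨j, hj⟩
  · simp [pivotOp, ← Matrix.mul_assoc, single_mul_single_of_ne _ _ _ _ hi]
  · simp [pivotOp, Matrix.mul_assoc, single_mul_single_of_ne _ _ _ _ hj.symm]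

theorem pivotOp_pivotOp_of_eq_zero (a b : PivotIndex p p')
    {X : Matrix m n F} (hX : pivotOp F p p' a X = 0) :
    pivotOp F p p' a (pivotOp F p p' b X) = 0 := by
  rcases a with ⟨i, hi⟩ | ⟨j, hj⟩ <;> rcases b with _ | _ <;>
    simp only [pivotOp, mulLeftLinearMap_apply, mulRightLinearMap_apply] at hX ⊢
  · rw [← Matrix.mul_assoc, single_mul_single_of_ne _ _ _ _ hi, Matrix.zero_mul]
  · rw [← Matrix.mul_assoc, hX, Matrix.zero_mul]
  · rw [Matrix.mul_assoc, hX, Matrix.mul_zero]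
  · rw [Matrix.mul_assoc, single_mul_single_of_ne _ _ _ _ hj.symm, Matrix.mul_zero]

theorem rank_add_smul_pivotOp (a : PivotIndex p p') (X : Matrix m n F)
    (c : F) : (X + c • pivotOp F p p' a X).rank = X.rank := by
  rcases a with ⟨i, hi⟩ | ⟨j, hj⟩
  · have : X + c • pivotOp F p p' (.inl ⟨i, hi⟩) X = transvection p i c * X := by
      simp [pivotOp, transvection, Matrix.add_mul, ← Matrix.smul_mul, smul_single]
    rw [this, rank_mul_eq_right_of_isUnit_det _ _ (by simp [det_transvection_of_ne _ _ hi.symm])]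
  · have : X + c • pivotOp F p p' (.inr ⟨j, hj⟩) X = X * transvection j p' c := by
      simp [pivotOp, transvection, Matrix.mul_add, ← Matrix.mul_smul, smul_single]
    rw [this, rank_mul_eq_left_of_isUnit_det _ _ (by simp [det_transvection_of_ne _ _ hj])]

theorem forall_pivotOp_eq_zero_iff (X : Matrix m n F) :
    (∀ a, pivotOp F p p' a X = 0) ↔ X = single p p' (X p p') := by
  constructor
  · intro h
    ext i j
    by_cases hi : i = p
    · by_cases hj : j = p'
      · simp [hi, hj]
      · have := congrFun (congrFun (h (.inr ⟨j, hj⟩)) i) p'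
        simp_all [pivotOp, single_apply]
    · have := congrFun (congrFun (h (.inl ⟨i, hi⟩)) p) j
      simp_all [pivotOp, single_apply]
  · intro h a
    rw [h]
    rcases a with ⟨i, hi⟩ | ⟨j, hj⟩
    · simp [pivotOp, single_mul_single_of_ne _ _ _ _ hi]
    · simp [pivotOp, single_mul_single_of_ne _ _ _ _ hj.symm]

end PivotOperations

section Hamming
variable {ι β : Type*} [Fintype ι] [DecidableEq ι] [Fintype β] [Zero β] [DecidableEq β]

theorem card_filter_support_eq (s : Finset ι) :
    #{x : ι → β | ({i | x i ≠ 0} : Finset ι) = s} = (Fintype.card β - 1) ^ #s := by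
  have : ({x : ι → β | ({i | x i ≠ 0} : Finset ι) = s} : Finset (ι → β)) =
      Fintype.piFinset fun i => if i ∈ s then ({0}ᶜ : Finset β) else {0} := by
    ext x
    simp only [mem_filter, mem_univ, true_and, Fintype.mem_piFinset, Finset.ext_iff]
    refine forall_congr' fun i => ?_
    split_ifs with hi <;> simp [hi]
  rw [this, Fintype.card_piFinset]
  simp [apply_ite card, prod_ite_mem, card_compl]

theorem card_filter_hammingNorm_eq (k : ℕ) :
    #{x : ι → β | hammingNorm x = k} =
      (Fintype.card ι).choose k * (Fintype.card β - 1) ^ k := by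
  rw [card_eq_sum_card_fiberwise (f := fun x => ({i | x i ≠ 0} : Finset ι))
    (t := powersetCard k univ) fun x hx => by simpa [hammingNorm] using hx]
  have hfiber : ∀ s ∈ powersetCard k univ,
      #{x ∈ ({x : ι → β | hammingNorm x = k} : Finset _) |
        ({i | x i ≠ 0} : Finset ι) = s} = (Fintype.card β - 1) ^ k := by
    intro s hs
    rw [← (mem_powersetCard.mp hs).2, ← card_filter_support_eq, filter_filter]
    congr 1
    refine filter_congr fun x _ => ⟨And.right, fun h => ⟨?_, h⟩⟩
    rw [hammingNorm, h]
  rw [sum_congr rfl hfiber, sum_const, card_powersetCard, card_univ, smul_eq_mul]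

theorem card_filter_hammingNorm_le (r : ℕ) :
    #{x : ι → β | hammingNorm x ≤ r} =
      ∑ k ∈ range (r + 1), (Fintype.card ι).choose k * (Fintype.card β - 1) ^ k := by
  rw [card_eq_sum_card_fiberwise (f := hammingNorm) (t := range (r + 1))
    fun x hx => by simpa [Nat.lt_succ_iff] using hx]
  refine sum_congr rfl fun k hk => ?_
  rw [← card_filter_hammingNorm_eq, filter_filter]
  congr 1
  exact filter_congr fun x _ =>
    ⟨And.right, fun h => ⟨h ▸ Nat.lt_succ_iff.mp (mem_range.mp hk), h⟩⟩

end Hamming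

section SumRankBall
variable {F : Type} [Field F] {t m n : ℕ} {p : Fin n} {p' : Fin m}

variable (F p p') in
def sumRankPivotOp (a : Fin t × PivotIndex p p') :
    Module.End F (Fin t → Matrix (Fin n) (Fin m) F) :=
  LinearMap.single F _ a.1 ∘ₗ pivotOp F p p' a.2 ∘ₗ LinearMap.proj a.1

theorem sumRankPivotOp_apply (a : Fin t × PivotIndex p p')
    (X : Fin t → Matrix (Fin n) (Fin m) F) :
    sumRankPivotOp F p p' a X = Pi.single a.1 (pivotOp F p p' a.2 (X a.1)) :=
  rfl

theorem sumRankPivotOp_sumRankPivotOp_self (a : Fin t × PivotIndex p p')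
    (X : Fin t → Matrix (Fin n) (Fin m) F) :
    sumRankPivotOp F p p' a (sumRankPivotOp F p p' a X) = 0 := by
  simp [sumRankPivotOp_apply, pivotOp_pivotOp_self]

theorem sumRankPivotOp_sumRankPivotOp_of_eq_zero (a b : Fin t × PivotIndex p p')
    {X : Fin t → Matrix (Fin n) (Fin m) F} (hX : sumRankPivotOp F p p' a X = 0) :
    sumRankPivotOp F p p' a (sumRankPivotOp F p p' b X) = 0 := by
  rw [sumRankPivotOp_apply, Pi.single_eq_zero_iff] at hX
  rw [sumRankPivotOp_apply, sumRankPivotOp_apply, Pi.single_eq_zero_iff]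
  rcases eq_or_ne a.1 b.1 with h | h
  · rw [← h, Pi.single_eq_same, pivotOp_pivotOp_of_eq_zero _ _ hX]
  · rw [Pi.single_eq_of_ne h, map_zero]

theorem sumRankW_add_smul_sumRankPivotOp (a : Fin t × PivotIndex p p')
    (X : Fin t → Matrix (Fin n) (Fin m) F) (c : F) :
    sumRankW (X + c • sumRankPivotOp F p p' a X) = sumRankW X := by
  refine sum_congr rfl fun k _ => ?_
  rcases eq_or_ne k a.1 with rfl | hk
  · simp [sumRankPivotOp_apply, rank_add_smul_pivotOp]
  · simp [sumRankPivotOp_apply, Pi.single_eq_of_ne hk]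

theorem forall_sumRankPivotOp_eq_zero_iff (X : Fin t → Matrix (Fin n) (Fin m) F) :
    (∀ a, sumRankPivotOp F p p' a X = 0) ↔ X = fun k => single p p' (X k p p') := by
  simp only [sumRankPivotOp_apply, Pi.single_eq_zero_iff, Prod.forall]
  rw [funext_iff]
  exact forall_congr' fun k => forall_pivotOp_eq_zero_iff (X k)

theorem sumRankW_single [DecidableEq F] (p : Fin n) (p' : Fin m) (x : Fin t → F) :
    sumRankW (fun k => single p p' (x k)) = hammingNorm x := by
  rw [sumRankW, hammingNorm, card_filter]
  refine sum_congr rfl fun k _ => ?_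
  split_ifs with hk
  · exact rank_single_of_ne_zero p p' hk
  · rw [not_not.mp hk, single_zero, rank_zero]

theorem sumRankW_piSingle (i : Fin t) (A : Matrix (Fin n) (Fin m) F) :
    sumRankW (Pi.single i A) = A.rank := by
  rw [sumRankW, Fintype.sum_eq_single i fun k hk => by simp [Pi.single_eq_of_ne hk]]
  simp

variable [Fintype F]

theorem ballVol_eq_card (r : ℕ) :
    ballVol F t n m r = #{X : Fin t → Matrix (Fin n) (Fin m) F | sumRankW X ≤ r} := by
  rw [ballVol, Nat.card_eq_fintype_card, Fintype.card_subtype]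

theorem one_lt_ballVol (i : Fin t) (p : Fin n) (p' : Fin m) {r : ℕ} (hr : 1 ≤ r) :
    1 < ballVol F t n m r := by
  rw [ballVol_eq_card, one_lt_card]
  refine ⟨0, mem_filter.mpr ⟨mem_univ _, by simp [sumRankW]⟩, Pi.single i (single p p' 1),
    ?_, ?_⟩
  · simpa [sumRankW_piSingle, rank_single_of_ne_zero] using hr
  · intro h
    simpa using congrFun (congrFun (congrFun h.symm i) p) p'

theorem ballVol_modEq_card_hammingNorm_le [DecidableEq F] (p : Fin n) (p' : Fin m) (r : ℕ) :
    ballVol F t n m r ≡ #{x : Fin t → F | hammingNorm x ≤ r} [MOD Fintype.card F] := by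
  have hfixed : #{X ∈ ({X | sumRankW X ≤ r} : Finset (Fin t → Matrix (Fin n) (Fin m) F)) |
      ∀ a, sumRankPivotOp F p p' a X = 0} = #{x : Fin t → F | hammingNorm x ≤ r} := by
    rw [← card_image_of_injective (f := fun (x : Fin t → F) k => single p p' (x k)) _
      fun x y h => funext fun k => by
      simpa using congrFun (congrFun (congrFun h k) p) p']
    congr 1
    ext X
    simp only [filter_filter, mem_filter, mem_univ, true_and, mem_image,
      forall_sumRankPivotOp_eq_zero_iff]
    constructor
    · rintro ⟨hw, hX⟩
      exact ⟨fun k => X k p p', by rwa [← sumRankW_single p p', ← hX], hX.symm⟩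
    · rintro ⟨x, hx, rfl⟩
      exact ⟨by rwa [sumRankW_single], by simp⟩
  rw [ballVol_eq_card, ← hfixed]
  exact card_modEq_card_filter_forall_eq_zero _ sumRankPivotOp_sumRankPivotOp_self
    sumRankPivotOp_sumRankPivotOp_of_eq_zero fun a X hX c => by
      simpa [sumRankW_add_smul_sumRankPivotOp] using hX

end SumRankBall

theorem IsPerfect.card_dvd_ballVol {F : Type} [Field F] [Fintype F] {t n d : ℕ}
    {C : Submodule F (Fin t → Matrix (Fin n) (Fin n) F)} (hC : IsPerfect F C d)
    (hV : 1 < ballVol F t n n ((d - 1) / 2)) :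
    Fintype.card F ∣ ballVol F t n n ((d - 1) / 2) := by
  have hquot : ballVol F t n n ((d - 1) / 2) = Nat.card (_ ⧸ C) := by
    rw [IsPerfect, C.card_eq_card_quotient_mul_card] at hC
    exact Nat.eq_of_mul_eq_mul_left Nat.card_pos hC
  rw [hquot, Module.natCard_eq_pow_finrank (K := F), Nat.card_eq_fintype_card] at hV ⊢
  refine dvd_pow_self _ fun h => ?_
  rw [h, pow_zero] at hV
  exact lt_irrefl _ hV

theorem intCast_dvd_sub_one_mul_sub_two_of_dvd {q t : ℕ} (hq : 1 ≤ q)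
    (h : q ∣ ∑ k ∈ range 3, t.choose k * (q - 1) ^ k) : (q : ℤ) ∣ (t - 1) * (t - 2) := by
  have hchoose : 2 * (t.choose 2 : ℤ) = t * (t - 1) := by
    have := Nat.cast_choose_two ℚ t
    field_simp at this
    exact_mod_cast (by linarith : (2 * t.choose 2 : ℚ) = t * (t - 1))
  have h' : (q : ℤ) ∣ 1 + t * (q - 1) + t.choose 2 * (q - 1) ^ 2 := by
    simpa [sum_range_succ, Nat.cast_sub hq] using Int.natCast_dvd_natCast.mpr h
  have hsplit : ((t : ℤ) - 1) * (t - 2) = 2 * (1 + t * (q - 1) + t.choose 2 * (q - 1) ^ 2) -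
      q * (2 * t + t * (t - 1) * (q - 2)) := by
    linear_combination -((q : ℤ) - 1) ^ 2 * hchoose
  rw [hsplit]
  exact dvd_sub (dvd_mul_of_dvd_right h' 2) (dvd_mul_right _ _)

theorem IsPrimePow.intCast_dvd_or_dvd_of_isCoprime {q : ℕ} (hq : IsPrimePow q) {a b : ℤ}
    (hab : IsCoprime a b) (h : (q : ℤ) ∣ a * b) : (q : ℤ) ∣ a ∨ (q : ℤ) ∣ b := by
  rw [Int.natCast_dvd, Int.natAbs_mul] at h
  rw [Int.natCast_dvd, Int.natCast_dvd]
  exact (Nat.Coprime.isPrimePow_dvd_mul (Int.isCoprime_iff_gcd_eq_one.mp hab) hq).mp h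

theorem stmt_9_general (F : Type) [Field F] [Fintype F] (q t n : ℕ)
    (hq : Fintype.card F = q) (ht1 : ¬ t ≡ 1 [MOD q]) (ht2 : ¬ t ≡ 2 [MOD q]) :
    ¬ ∃ (C : Submodule F (Fin t → Matrix (Fin n) (Fin n) F)) (d : ℕ),
        IsMinDist C d ∧ IsPerfect F C d ∧ (d = 5 ∨ d = 6) := by
  classical
  rintro ⟨C, d, hmin, hperf, hd⟩
  obtain ⟨x, -, hx, -⟩ := hmin.1
  obtain ⟨i, hi⟩ := Function.ne_iff.mp hx
  obtain ⟨p, -⟩ := Function.ne_iff.mp hi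
  have hr : (d - 1) / 2 = 2 := by omega
  have hdvd : q ∣ ballVol F t n n 2 := by
    have := hperf.card_dvd_ballVol (by rw [hr]; exact one_lt_ballVol i p p one_le_two)
    rwa [hr, hq] at this
  have hmod := ballVol_modEq_card_hammingNorm_le (F := F) (t := t) p p 2
  rw [card_filter_hammingNorm_le, Fintype.card_fin, hq] at hmod
  have hq1 : 1 ≤ q := hq ▸ Fintype.card_pos
  obtain h | h := (hq ▸ FiniteField.isPrimePow_card F).intCast_dvd_or_dvd_of_isCoprime
    ⟨1, -1, by ring⟩ (intCast_dvd_sub_one_mul_sub_two_of_dvd (t := t) hq1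
      ((Nat.modEq_zero_iff_dvd.mp (hmod.symm.trans (Nat.modEq_zero_iff_dvd.mpr hdvd)))))
  · exact ht1 (Nat.modEq_iff_dvd.mpr (by simpa using h)).symm
  · exact ht2 (Nat.modEq_iff_dvd.mpr (by simpa using h)).symm

theorem stmt_9 (F : Type) [Field F] [Fintype F] (q t n : ℕ)
    (hq : Fintype.card F = q) (hodd : Odd q) (ht : 1 ≤ t) (hn : 2 ≤ n)
    (ht1 : ¬ t ≡ 1 [MOD q]) (ht2 : ¬ t ≡ 2 [MOD q]) :
    ¬ ∃ (C : Submodule F (Fin t → Matrix (Fin n) (Fin n) F)) (d : ℕ),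
        IsMinDist C d ∧ IsPerfect F C d ∧ (d = 5 ∨ d = 6) :=
  stmt_9_general F q t n hq ht1 ht2
end

section
/- Let q be a prime power, t ≥ 1 and n ≥ 2 integers, and M = (𝔽_q^{n×n})^t. If C is a perfect linear sum-rank code in M with minimum distance d ∈ {5, 6}, then n divides the 𝔽_q-dimension of C. -/
open Matrix

/-!
Choose a basis of a degree-`n` extension `E` of `F`. Left multiplication through the regular
representation `E → Matrix (Fin n) (Fin n) F` makes the ambient space an `E`-vector space whose
nonzero scalars are invertible matrices, hence preserve the sum-rank weight. The nonzero tuples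
of weight at most `r` are therefore a union of punctured `E`-lines, so `q ^ n - 1` divides
`V_r - 1`. For a perfect code `V_r = q ^ (t n² - dim C)`, and `q ^ n - 1 ∣ q ^ k - 1` forces
`n ∣ k`; since `n ∣ t n²`, also `n ∣ dim C`.
-/

theorem Nat.dvd_of_pow_sub_one_dvd_pow_sub_one {q m n : ℕ} (hq : 2 ≤ q)
    (h : q ^ m - 1 ∣ q ^ n - 1) : m ∣ n := by
  have hpow : q ^ Nat.gcd m n - 1 = q ^ m - 1 := by
    rw [← Nat.pow_sub_one_gcd_pow_sub_one, Nat.gcd_eq_left h]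
  refine Nat.gcd_eq_left_iff_dvd.mp (Nat.pow_right_injective hq ?_)
  exact Nat.sub_one_cancel (Nat.pow_pos (by omega)) (Nat.pow_pos (by omega)) hpow

theorem MulAction.card_dvd_card_of_stabilizer_eq_bot {G X : Type*} [Group G] [MulAction G X]
    (h : ∀ x : X, stabilizer G x = ⊥) : Nat.card G ∣ Nat.card X := by
  rw [Nat.card_congr (selfEquivOrbitsQuotientProd h), Nat.card_prod]
  exact dvd_mul_left _ _

theorem Module.card_units_dvd_card_of_smul_mem {K V : Type*} [DivisionRing K] [AddCommGroup V]
    [Module K V] {S : Set V} (h0 : (0 : V) ∉ S) (hS : ∀ c : K, c ≠ 0 → ∀ x ∈ S, c • x ∈ S) :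
    Nat.card Kˣ ∣ Nat.card S := by
  let P : SubMulAction Kˣ V := ⟨S, fun c x hx => hS c c.ne_zero x hx⟩
  refine MulAction.card_dvd_card_of_stabilizer_eq_bot (X := P) fun x => ?_
  rw [SubMulAction.stabilizer_of_subMul]
  exact Module.stabilizer_units_eq_bot_of_ne_zero K fun hx => h0 (hx ▸ x.2)

section SumRank

variable {F : Type} [Field F] {t n m : ℕ}

theorem sumRankW_zero : sumRankW (0 : Fin t → Matrix (Fin n) (Fin m) F) = 0 := by
  simp [sumRankW]

theorem sumRankW_mul_left {A : Matrix (Fin n) (Fin n) F} (hA : IsUnit A)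
    (X : Fin t → Matrix (Fin n) (Fin m) F) : sumRankW (fun i => A * X i) = sumRankW X :=
  Finset.sum_congr rfl fun _ _ =>
    rank_mul_eq_right_of_isUnit_det _ _ ((isUnit_iff_isUnit_det A).mp hA)

theorem ballVol_eq_card_add_one [Fintype F] (r : ℕ) :
    ballVol F t n m r =
      Nat.card {X : Fin t → Matrix (Fin n) (Fin m) F // X ≠ 0 ∧ sumRankW X ≤ r} + 1 := by
  have hball : {X : Fin t → Matrix (Fin n) (Fin m) F | sumRankW X ≤ r} =
      insert 0 {X | X ≠ 0 ∧ sumRankW X ≤ r} := by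
    ext X
    by_cases hX : X = 0 <;> simp [hX, sumRankW_zero]
  change Nat.card {X | sumRankW X ≤ r} = Nat.card {X | X ≠ 0 ∧ sumRankW X ≤ r} + 1
  rw [Nat.card_coe_set_eq, hball, Set.ncard_insert_of_notMem (by simp), Nat.card_coe_set_eq]

theorem card_sub_one_dvd_card_nonzero_sumRankW_le (E : Type) [Field E] [Algebra F E]
    (b : Module.Basis (Fin n) F E) (r : ℕ) :
    Nat.card E - 1 ∣
      Nat.card {X : Fin t → Matrix (Fin n) (Fin n) F // X ≠ 0 ∧ sumRankW X ≤ r} := by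
  let φ := Algebra.leftMulMatrix b
  let _ : Module E (Fin t → Matrix (Fin n) (Fin n) F) := Module.compHom _ φ.toRingHom
  rw [← Nat.card_units]
  refine Module.card_units_dvd_card_of_smul_mem (S := {X | X ≠ 0 ∧ sumRankW X ≤ r})
    (by simp) fun c hc X ⟨hX, hw⟩ => ⟨smul_ne_zero hc hX, ?_⟩
  have hφc : IsUnit (φ c) := (isUnit_iff_ne_zero.mpr hc).map φ
  -- `c • X` unfolds to `fun i => φ c * X i`
  exact (sumRankW_mul_left hφc X).trans_le hw

theorem card_pow_sub_one_dvd_card_nonzero_sumRankW_le [Finite F] [NeZero n] (r : ℕ) :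
    Nat.card F ^ n - 1 ∣
      Nat.card {X : Fin t → Matrix (Fin n) (Fin n) F // X ≠ 0 ∧ sumRankW X ≤ r} := by
  have : Fact (ringChar F).Prime := ⟨CharP.char_is_prime F _⟩
  rw [← FiniteField.natCard_extension F (ringChar F) n]
  exact card_sub_one_dvd_card_nonzero_sumRankW_le _
    (Module.finBasisOfFinrankEq F _ (FiniteField.finrank_extension F (ringChar F) n)) r

theorem IsPerfect.ballVol_eq [Fintype F] {C : Submodule F (Fin t → Matrix (Fin n) (Fin n) F)}
    {d : ℕ} (hC : IsPerfect F C d) :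
    ballVol F t n n ((d - 1) / 2) = Nat.card F ^
      (Module.finrank F (Fin t → Matrix (Fin n) (Fin n) F) - Module.finrank F C) := by
  have hle := Submodule.finrank_le C
  unfold IsPerfect at hC
  rw [Module.natCard_eq_pow_finrank (K := F) (V := C),
    Module.natCard_eq_pow_finrank (K := F) (V := Fin t → Matrix (Fin n) (Fin n) F),
    ← Nat.add_sub_cancel' hle, pow_add] at hC
  exact Nat.eq_of_mul_eq_mul_left (Nat.pos_of_ne_zero (by simp)) hC

end SumRank

theorem stmt_11_general (F : Type) [Field F] [Fintype F] (t n : ℕ) (hn : 2 ≤ n)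
    (C : Submodule F (Fin t → Matrix (Fin n) (Fin n) F)) (d : ℕ)
    (hperf : IsPerfect F C d) :
    n ∣ Module.finrank F C := by
  have : NeZero n := ⟨by omega⟩
  set N := Module.finrank F (Fin t → Matrix (Fin n) (Fin n) F)
  have hN : N = t * (n * n) := by simp [N, Module.finrank_pi_fintype, Module.finrank_matrix]
  have hdvd : Nat.card F ^ n - 1 ∣ Nat.card F ^ (N - Module.finrank F C) - 1 := by
    rw [← hperf.ballVol_eq, ballVol_eq_card_add_one, Nat.add_sub_cancel]
    exact card_pow_sub_one_dvd_card_nonzero_sumRankW_le _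
  have hcodim := Nat.dvd_of_pow_sub_one_dvd_pow_sub_one Finite.one_lt_card hdvd
  have hle : Module.finrank F C ≤ N := Submodule.finrank_le C
  rw [← Nat.sub_sub_self hle]
  exact Nat.dvd_sub (hN ▸ (dvd_mul_right n n).mul_left t) hcodim

theorem stmt_11 (F : Type) [Field F] [Fintype F] (q t n : ℕ)
    (hq : Fintype.card F = q) (ht : 1 ≤ t) (hn : 2 ≤ n)
    (C : Submodule F (Fin t → Matrix (Fin n) (Fin n) F)) (d : ℕ)
    (hmin : IsMinDist C d) (hperf : IsPerfect F C d) (hd : d = 5 ∨ d = 6) :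
    n ∣ Module.finrank F C :=
  stmt_11_general F t n hn C d hperf
end

section
/- Let q be a prime power, t ≥ 1, n ≥ 2 and k ≥ 1 integers, and M = (𝔽_q^{n×n})^t. If gcd(q, k!) = 1 and gcd(t, q) ≠ 1, then there exists no perfect linear sum-rank code in M whose minimum distance d satisfies ⌊(d−1)/2⌋ = k. -/
/-!
Let `p` be the characteristic of `𝔽_q`; the hypotheses give `p ∣ t` and `k < p`. Splitting the
`t = p·s` coordinates into `p` blocks of `s`, the group `ℤ/p` acts on the sum-rank ball of radius
`k` by rotating the blocks. A fixed tuple repeats one block `p` times, so its weight is at least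
`p > k` unless it is zero; hence `V_k ≡ 1 (mod p)`. Perfection makes `V_k` a divisor of
`|M| = q^(tn²)`, a power of `p`, so `V_k = 1`, which is absurd: the ball also contains a
nonzero tuple of rank one.
-/

open Matrix

def WeightBall {α : Type*} (w : α → ℕ) (ι : Type*) [Fintype ι] (k : ℕ) : Type _ :=
  {x : ι → α // ∑ i, w (x i) ≤ k}

namespace WeightBall

variable {α : Type*} (w : α → ℕ)

def indexCongr {ι κ : Type*} [Fintype ι] [Fintype κ] (e : ι ≃ κ) (k : ℕ) :
    WeightBall w ι k ≃ WeightBall w κ k :=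
  Equiv.subtypeEquiv (e.arrowCongr (Equiv.refl α)) fun x => by
    simp [Equiv.arrowCongr_apply, ← e.symm.sum_comp]

def curry (ι κ : Type*) [Fintype ι] [Fintype κ] (k : ℕ) :
    WeightBall w (ι × κ) k ≃ WeightBall (fun y : κ → α => ∑ j, w (y j)) ι k :=
  Equiv.subtypeEquiv (Equiv.curry ι κ α) fun x => by
    simp [Fintype.sum_prod_type]

instance (p : ℕ) [NeZero p] (k : ℕ) :
    MulAction (Multiplicative (ZMod p)) (WeightBall w (ZMod p) k) where
  smul a x := ⟨fun i => x.1 (i + a.toAdd),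
    (Equiv.sum_comp (Equiv.addRight a.toAdd) (fun i => w (x.1 i))).trans_le x.2⟩
  one_smul x := Subtype.ext <| funext fun i => congrArg x.1 (add_zero i)
  mul_smul _ _ x := Subtype.ext <| funext fun i => congrArg x.1 (add_assoc i _ _).symm

lemma smul_apply {p : ℕ} [NeZero p] {k : ℕ} (a : Multiplicative (ZMod p))
    (x : WeightBall w (ZMod p) k) (i : ZMod p) : (a • x).1 i = x.1 (i + a.toAdd) :=
  rfl

variable {w} [Zero α]

def zero {ι : Type*} [Fintype ι] (hw0 : w 0 = 0) (k : ℕ) : WeightBall w ι k :=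
  ⟨0, by simp [hw0]⟩

lemma eq_zero_of_mem_fixedPoints {p : ℕ} [NeZero p] (hw : ∀ a, w a = 0 ↔ a = 0) {k : ℕ}
    (hk : k < p) {x : WeightBall w (ZMod p) k}
    (hx : x ∈ MulAction.fixedPoints (Multiplicative (ZMod p)) (WeightBall w (ZMod p) k)) :
    x = zero ((hw 0).2 rfl) k := by
  have hconst (i : ZMod p) : x.1 i = x.1 0 := by
    simpa [smul_apply] using congrArg (·.1 0) (hx (Multiplicative.ofAdd i))
  have hsum : p * w (x.1 0) ≤ k := by
    simpa [hconst, ZMod.card] using x.2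
  have h0 : x.1 0 = 0 := (hw _).1 (by nlinarith)
  exact Subtype.ext <| funext fun i => (hconst i).trans h0

lemma card_zmod_modEq_one {p : ℕ} [Fact p.Prime] [Finite α] (hw : ∀ a, w a = 0 ↔ a = 0)
    {k : ℕ} (hk : k < p) : Nat.card (WeightBall w (ZMod p) k) ≡ 1 [MOD p] := by
  have hG : IsPGroup p (Multiplicative (ZMod p)) := IsPGroup.of_card (n := 1) (by simp)
  have : Finite (WeightBall w (ZMod p) k) := Subtype.finite
  have hfix : Nat.card (MulAction.fixedPoints _ (WeightBall w (ZMod p) k)) = 1 :=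
    Nat.card_eq_one_iff_exists.2 ⟨⟨zero ((hw 0).2 rfl) k, fun _ => rfl⟩,
      fun y => Subtype.ext (eq_zero_of_mem_fixedPoints hw hk y.2)⟩
  simpa [hfix] using hG.card_modEq_card_fixedPoints (WeightBall w (ZMod p) k)

lemma card_modEq_one_of_dvd {p t : ℕ} [Fact p.Prime] [Finite α] (hw : ∀ a, w a = 0 ↔ a = 0)
    {k : ℕ} (hk : k < p) (hpt : p ∣ t) : Nat.card (WeightBall w (Fin t) k) ≡ 1 [MOD p] := by
  obtain ⟨s, rfl⟩ := hpt
  have hw' (y : Fin s → α) : ∑ j, w (y j) = 0 ↔ y = 0 := by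
    simp [Finset.sum_eq_zero_iff, hw, funext_iff]
  let e : ZMod p × Fin s ≃ Fin (p * s) :=
    ((ZMod.finEquiv p).toEquiv.symm.prodCongr (Equiv.refl _)).trans finProdFinEquiv
  rw [Nat.card_congr ((indexCongr w e k).symm.trans (curry w _ _ k))]
  exact card_zmod_modEq_one hw' hk

lemma one_lt_card {ι : Type*} [Fintype ι] [Nonempty ι] [Finite α] {a : α} (ha : a ≠ 0)
    (hw0 : w 0 = 0) {k : ℕ} (hwa : w a ≤ k) : 1 < Nat.card (WeightBall w ι k) := by
  classical
  have : Finite (WeightBall w ι k) := Subtype.finite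
  obtain ⟨i⟩ := ‹Nonempty ι›
  have hsingle : ∑ j, w (Pi.single (M := fun _ => α) i a j) = w a := by
    simp [Pi.apply_single (fun _ => w) (fun _ => hw0)]
  refine Finite.one_lt_card_iff_nontrivial.2 ⟨⟨⟨Pi.single i a, hsingle ▸ hwa⟩, zero hw0 k, ?_⟩⟩
  intro h
  exact ha (by simpa [zero] using congrArg (·.1 i) h)

end WeightBall

theorem Matrix.rank_eq_zero_iff_s16 {F m n : Type*} [Field F] [Fintype n] (A : Matrix m n F) :
    A.rank = 0 ↔ A = 0 := by
  classical
  rw [Matrix.rank, Submodule.finrank_eq_zero, LinearMap.range_eq_bot, ← Matrix.toLin'_apply',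
    LinearEquiv.map_eq_zero_iff]

theorem Nat.eq_one_of_dvd_prime_pow_of_modEq_one {p a N : ℕ} (hp : p.Prime) (hdvd : a ∣ p ^ N)
    (hmod : a ≡ 1 [MOD p]) : a = 1 := by
  obtain ⟨_ | m, -, rfl⟩ := (Nat.dvd_prime_pow hp).1 hdvd
  · rfl
  · have := Nat.mod_eq_of_lt hp.one_lt
    simp_all [Nat.ModEq, Nat.pow_succ]

lemma ballVol_eq_card_weightBall (F : Type) [Field F] [Fintype F] (t n m r : ℕ) :
    ballVol F t n m r =
      Nat.card (WeightBall (Matrix.rank : Matrix (Fin n) (Fin m) F → ℕ) (Fin t) r) :=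
  rfl

theorem stmt_16_general (F : Type) [Field F] [Fintype F] (q t n k : ℕ)
    (hq : Fintype.card F = q) (hk : 1 ≤ k)
    (hgcd : Nat.gcd q (Nat.factorial k) = 1) (htq : Nat.gcd t q ≠ 1) :
    ¬ ∃ (C : Submodule F (Fin t → Matrix (Fin n) (Fin n) F)) (d : ℕ),
        IsMinDist C d ∧ IsPerfect F C d ∧ (d - 1) / 2 = k := by
  rintro ⟨C, d, hmin, hperf, hdk⟩
  obtain ⟨p, -, e, hp, rfl⟩ : ∃ p, CharP F p ∧ ∃ e : ℕ+, p.Prime ∧ q = p ^ (e : ℕ) :=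
    hq ▸ FiniteField.card' F
  have : Fact p.Prime := ⟨hp⟩
  have hpt : p ∣ t := by
    by_contra h
    exact htq (Nat.Coprime.pow_right _ ((hp.coprime_iff_not_dvd.2 h).symm))
  have hkp : k < p := by
    by_contra h
    exact hp.one_lt.ne' (Nat.dvd_one.1 (hgcd ▸ Nat.dvd_gcd (dvd_pow_self p e.ne_zero)
      ((hp.dvd_factorial).2 (not_lt.1 h))))
  have hrank : ∀ A : Matrix (Fin n) (Fin n) F, A.rank = 0 ↔ A = 0 := Matrix.rank_eq_zero_iff_s16
  have hmodEq : ballVol F t n n k ≡ 1 [MOD p] := WeightBall.card_modEq_one_of_dvd hrank hkp hpt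
  have hdvd :
      ballVol F t n n k ∣ p ^ (e * Module.finrank F (Fin t → Matrix (Fin n) (Fin n) F)) := by
    rw [pow_mul, ← hq, ← Module.card_eq_pow_finrank, ← Nat.card_eq_fintype_card, ← hperf, hdk]
    exact dvd_mul_left _ _
  obtain ⟨x, -, hx0, -⟩ := hmin.1
  obtain ⟨i, hi⟩ := Function.ne_iff.1 hx0
  obtain ⟨j, -⟩ := Function.ne_iff.1 hi
  have hone : 1 < ballVol F t n n k := by
    have : Nonempty (Fin t) := ⟨i⟩
    rw [ballVol_eq_card_weightBall]
    refine WeightBall.one_lt_card (a := vecMulVec 1 1) ?_ ((hrank 0).2 rfl)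
      ((rank_vecMulVec_le _ _).trans hk)
    exact fun h => by simpa [vecMulVec] using congrFun (congrFun h j) j
  exact hone.ne' (Nat.eq_one_of_dvd_prime_pow_of_modEq_one hp hdvd hmodEq)

theorem stmt_16 (F : Type) [Field F] [Fintype F] (q t n k : ℕ)
    (hq : Fintype.card F = q) (ht : 1 ≤ t) (hn : 2 ≤ n) (hk : 1 ≤ k)
    (hgcd : Nat.gcd q (Nat.factorial k) = 1) (htq : Nat.gcd t q ≠ 1) :
    ¬ ∃ (C : Submodule F (Fin t → Matrix (Fin n) (Fin n) F)) (d : ℕ),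
        IsMinDist C d ∧ IsPerfect F C d ∧ (d - 1) / 2 = k :=
  stmt_16_general F q t n k hq hk hgcd htq
end
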